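/- Let f be differentiable and strongly convex with parameters l ≤ L (i.e., f(y) - f(x) ≥ ⟨∇f(x), y-x⟩ + (l/2)‖y-x‖² and ‖∇f(x)-∇f(y)‖ ≤ L‖x-y‖), with minimizer x* and residual v_f(x) = f(x) - f(x*). Let x⁰, …, xᵐ be a sequence with gradients gʲ = ∇f(xʲ) and define λʲ = √((f(xʲ) - f(xʲ⁺¹))/‖gʲ‖²), where each step satisfies f(xʲ⁺¹) ≤ f(xʲ) - (1/(2L))‖gʲ‖². Suppose ρ ≥ 1, m ≥ ⌈8ρ√(L/l)⌉, and the two conditions hold: (i) ((f(xᵐ⁻¹) - f(x⁰))/4)·(Σ_{j=0}^{m-1} λʲ) + Σ_{j=0}^{m-1} λʲ⟨gʲ, xʲ - x⁰⟩ < 0, and (ii) ‖Σ_{j=0}^{m-1} λʲ gʲ‖ ≤ ρ√(Σ_{j=0}^{m-1} (λʲ)²‖gʲ‖²). Then v_f(xᵐ) ≤ (1/2)·v_f(x⁰). -/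

import Mathlib

/-!
The weights `λʲ` are at least `1/√(2L)`, so `m ≥ 8ρ√(L/l)` makes `S = ∑ λʲ ≥ 4ρ√(2/l)`.
Convexity at `x*` and monotonicity give `S · v_f(xᵐ) ≤ ∑ λʲ⟪gʲ, xʲ - x⁰⟫ + ⟪s, x⁰ - x*⟫` with
`s = ∑ λʲ gʲ`. Condition (i) bounds the first sum by `S · v_f(x⁰)/4`. For the second term,
(ii) and telescoping give `‖s‖ ≤ ρ √(v_f(x⁰))`, while strong convexity gives
`‖x⁰ - x*‖ ≤ √(2/l) √(v_f(x⁰))`, so it is at most `ρ√(2/l) · v_f(x⁰) ≤ S · v_f(x⁰)/4`.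
Hence `S · v_f(xᵐ) < S · v_f(x⁰)/2`.
-/

open RealInnerProductSpace Finset

theorem le_of_forall_succ_le_of_le {α : Type*} [Preorder α] {u : ℕ → α} {m : ℕ}
    (h : ∀ j < m, u (j + 1) ≤ u j) {j : ℕ} (hj : j ≤ m) : u m ≤ u j := by
  induction hj using Nat.decreasingInduction with
  | self => exact le_rfl
  | of_succ k hk ih => exact ih.trans (h k hk)

theorem sqrt_div_mul_sqrt_one_div_two_mul {l L : ℝ} (hl : 0 < l) (hL : 0 < L) :
    √(L / l) * √(1 / (2 * L)) = √(2 / l) / 2 := by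
  rw [← Real.sqrt_mul (by positivity), Real.sqrt_eq_iff_eq_sq (by positivity) (by positivity),
    div_pow, Real.sq_sqrt (by positivity)]
  field_simp

section StepWeights

variable {u a w : ℕ → ℝ} {m : ℕ}

theorem sum_sq_mul_eq_of_eq_sqrt (ha : ∀ j < m, 0 < a j) (hu : ∀ j < m, u (j + 1) ≤ u j)
    (hw : ∀ j, w j = √((u j - u (j + 1)) / a j)) :
    ∑ j ∈ range m, w j ^ 2 * a j = u 0 - u m := by
  rw [← sum_range_sub' u m]
  refine sum_congr rfl fun j hj => ?_
  have hj := mem_range.mp hj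
  rw [hw, Real.sq_sqrt (div_nonneg (sub_nonneg.mpr (hu j hj)) (ha j hj).le),
    div_mul_cancel₀ _ (ha j hj).ne']

theorem card_mul_sqrt_le_sum_of_eq_sqrt {L : ℝ} (ha : ∀ j < m, 0 < a j)
    (hdec : ∀ j < m, u (j + 1) ≤ u j - 1 / (2 * L) * a j)
    (hw : ∀ j, w j = √((u j - u (j + 1)) / a j)) :
    m * √(1 / (2 * L)) ≤ ∑ j ∈ range m, w j := by
  simpa using card_nsmul_le_sum (range m) w √(1 / (2 * L)) fun j hj => by
    have hj := mem_range.mp hj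
    rw [hw]
    exact Real.sqrt_le_sqrt ((le_div_iff₀ (ha j hj)).mpr (by linarith [hdec j hj]))

end StepWeights

section InnerProductSpace

variable {E : Type*} [NormedAddCommGroup E] [InnerProductSpace ℝ E]

theorem gradient_eq_zero_of_isLocalMin [CompleteSpace E] {f : E → ℝ} {a : E}
    (h : IsLocalMin f a) : gradient f a = 0 := by
  simp [gradient, h.fderiv_eq_zero]

theorem sub_le_inner_gradient_of_strongly_convex [CompleteSpace E] {f : E → ℝ} {l : ℝ}
    (hl : 0 ≤ l) (hsc : ∀ x y, f y - f x ≥ ⟪gradient f x, y - x⟫ + l / 2 * ‖y - x‖ ^ 2)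
    (x y : E) : f x - f y ≤ ⟪gradient f x, x - y⟫ := by
  have h := hsc x y
  rw [← neg_sub x y, inner_neg_right] at h
  nlinarith [sq_nonneg ‖y - x‖]

theorem norm_sub_le_of_strongly_convex_of_isLocalMin [CompleteSpace E] {f : E → ℝ} {l : ℝ}
    (hl : 0 < l) (hsc : ∀ x y, f y - f x ≥ ⟪gradient f x, y - x⟫ + l / 2 * ‖y - x‖ ^ 2)
    {xstar : E} (hmin : IsLocalMin f xstar) (y : E) :
    ‖y - xstar‖ ≤ √(2 / l) * √(f y - f xstar) := by
  have h := hsc xstar y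
  rw [gradient_eq_zero_of_isLocalMin hmin, inner_zero_left, zero_add] at h
  rw [← Real.sqrt_mul (by positivity), ← Real.sqrt_sq (norm_nonneg _)]
  refine Real.sqrt_le_sqrt ?_
  rw [div_mul_eq_mul_div, le_div_iff₀ hl]
  linarith

theorem sum_mul_sub_le_sum_mul_inner_add_inner {f : E → ℝ} {x g : ℕ → E} {w : ℕ → ℝ}
    {xstar : E} {m : ℕ} (hw : ∀ j, 0 ≤ w j)
    (hconv : ∀ j < m, f (x j) - f xstar ≤ ⟪g j, x j - xstar⟫)
    (hmono : ∀ j < m, f (x m) ≤ f (x j)) :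
    (∑ j ∈ range m, w j) * (f (x m) - f xstar) ≤
      ∑ j ∈ range m, w j * ⟪g j, x j - x 0⟫ + ⟪∑ j ∈ range m, w j • g j, x 0 - xstar⟫ := by
  simp only [sum_inner, real_inner_smul_left, sum_mul, ← sum_add_distrib, ← mul_add,
    ← inner_add_right, sub_add_sub_cancel]
  refine sum_le_sum fun j hj => ?_
  have hj := mem_range.mp hj
  exact mul_le_mul_of_nonneg_left ((sub_le_sub_right (hmono j hj) _).trans (hconv j hj)) (hw j)

end InnerProductSpace

theorem cgso_halving_lemma_general {n : ℕ}
    (f : EuclideanSpace ℝ (Fin n) → ℝ) (l L ρ : ℝ) (m : ℕ)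
    (hl : 0 < l) (hlL : l ≤ L) (hρ : 1 ≤ ρ)
    (hsc : ∀ x y, f y - f x ≥ ⟪gradient f x, y - x⟫ + l / 2 * ‖y - x‖ ^ 2)
    (xstar : EuclideanSpace ℝ (Fin n)) (hmin : ∀ x, f xstar ≤ f x)
    (x : ℕ → EuclideanSpace ℝ (Fin n))
    (g : ℕ → EuclideanSpace ℝ (Fin n)) (hg : ∀ j, g j = gradient f (x j))
    (hgne : ∀ j < m, g j ≠ 0)
    (hdec : ∀ j < m, f (x (j + 1)) ≤ f (x j) - 1 / (2 * L) * ‖g j‖ ^ 2)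
    (lam : ℕ → ℝ)
    (hlam : ∀ j, lam j = Real.sqrt ((f (x j) - f (x (j + 1))) / ‖g j‖ ^ 2))
    (hm : 8 * ρ * Real.sqrt (L / l) ≤ (m : ℝ))
    (h1 : (f (x (m - 1)) - f (x 0)) / 4 * (∑ j ∈ Finset.range m, lam j) +
        ∑ j ∈ Finset.range m, lam j * ⟪g j, x j - x 0⟫ < 0)
    (h2 : ‖∑ j ∈ Finset.range m, lam j • g j‖ ≤
        ρ * Real.sqrt (∑ j ∈ Finset.range m, (lam j) ^ 2 * ‖g j‖ ^ 2)) :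
    f (x m) - f xstar ≤ 1 / 2 * (f (x 0) - f xstar) := by
  have hL : 0 < L := hl.trans_le hlL
  have hg2 : ∀ j < m, 0 < ‖g j‖ ^ 2 := fun j hj => pow_pos (norm_pos_iff.mpr (hgne j hj)) 2
  have hstep : ∀ j < m, f (x (j + 1)) ≤ f (x j) :=
    fun j hj => (hdec j hj).trans (sub_le_self _ (by positivity))
  have hmono : ∀ j < m, f (x m) ≤ f (x j) :=
    fun j hj => le_of_forall_succ_le_of_le (u := fun j => f (x j)) hstep hj.le
  set S := ∑ j ∈ range m, lam j
  set s := ∑ j ∈ range m, lam j • g j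
  set v := √(f (x 0) - f xstar)
  have hv : v ^ 2 = f (x 0) - f xstar := Real.sq_sqrt (sub_nonneg.mpr (hmin _))
  have hS : 4 * ρ * √(2 / l) ≤ S := calc
    4 * ρ * √(2 / l) = 8 * ρ * √(L / l) * √(1 / (2 * L)) := by
      rw [mul_assoc _ √(L / l), sqrt_div_mul_sqrt_one_div_two_mul hl hL]; ring
    _ ≤ m * √(1 / (2 * L)) := by gcongr
    _ ≤ S := card_mul_sqrt_le_sum_of_eq_sqrt hg2 hdec hlam
  have hs : ‖s‖ ≤ ρ * v := h2.trans <| by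
    rw [sum_sq_mul_eq_of_eq_sqrt hg2 hstep hlam]
    exact mul_le_mul_of_nonneg_left (Real.sqrt_le_sqrt (by linarith [hmin (x m)])) (by linarith)
  have hx0 := norm_sub_le_of_strongly_convex_of_isLocalMin hl hsc (.of_forall hmin) (x 0)
  have hsum := sum_mul_sub_le_sum_mul_inner_add_inner (xstar := xstar)
    (fun j => hlam j ▸ Real.sqrt_nonneg _)
    (fun j _ => hg j ▸ sub_le_inner_gradient_of_strongly_convex hl.le hsc _ _) hmono
  have hinner : ⟪s, x 0 - xstar⟫ ≤ S / 4 * v ^ 2 := calc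
    ⟪s, x 0 - xstar⟫ ≤ ρ * v * (√(2 / l) * v) :=
      (real_inner_le_norm _ _).trans (mul_le_mul hs hx0 (norm_nonneg _) (by positivity))
    _ = 4 * ρ * √(2 / l) / 4 * v ^ 2 := by ring
    _ ≤ S / 4 * v ^ 2 := by gcongr
  have hlast : f (x 0) - f (x (m - 1)) ≤ v ^ 2 := by linarith [hmin (x (m - 1))]
  have hS0 : 0 ≤ S := (by positivity : 0 ≤ 4 * ρ * √(2 / l)).trans hS
  have hhalf : S * (f (x m) - f xstar) < S * (v ^ 2 / 2) := calc
    _ ≤ _ := hsum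
    _ < (f (x 0) - f (x (m - 1))) / 4 * S + S / 4 * v ^ 2 := by linarith
    _ ≤ S * (v ^ 2 / 2) := by nlinarith
  linarith [lt_of_mul_lt_mul_left hhalf hS0]

theorem cgso_halving_lemma {n : ℕ}
    (f : EuclideanSpace ℝ (Fin n) → ℝ) (l L ρ : ℝ) (m : ℕ)
    (hl : 0 < l) (hlL : l ≤ L) (hρ : 1 ≤ ρ)
    (hf : Differentiable ℝ f)
    (hsc : ∀ x y, f y - f x ≥ ⟪gradient f x, y - x⟫ + l / 2 * ‖y - x‖ ^ 2)
    (hlip : ∀ x y, ‖gradient f x - gradient f y‖ ≤ L * ‖x - y‖)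
    (xstar : EuclideanSpace ℝ (Fin n)) (hmin : ∀ x, f xstar ≤ f x)
    (x : ℕ → EuclideanSpace ℝ (Fin n))
    (g : ℕ → EuclideanSpace ℝ (Fin n)) (hg : ∀ j, g j = gradient f (x j))
    (hgne : ∀ j < m, g j ≠ 0)
    (hdec : ∀ j < m, f (x (j + 1)) ≤ f (x j) - 1 / (2 * L) * ‖g j‖ ^ 2)
    (lam : ℕ → ℝ)
    (hlam : ∀ j, lam j = Real.sqrt ((f (x j) - f (x (j + 1))) / ‖g j‖ ^ 2))
    (hm : 8 * ρ * Real.sqrt (L / l) ≤ (m : ℝ))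
    (h1 : (f (x (m - 1)) - f (x 0)) / 4 * (∑ j ∈ Finset.range m, lam j) +
        ∑ j ∈ Finset.range m, lam j * ⟪g j, x j - x 0⟫ < 0)
    (h2 : ‖∑ j ∈ Finset.range m, lam j • g j‖ ≤
        ρ * Real.sqrt (∑ j ∈ Finset.range m, (lam j) ^ 2 * ‖g j‖ ^ 2)) :
    f (x m) - f xstar ≤ 1 / 2 * (f (x 0) - f xstar) :=
  cgso_halving_lemma_general f l L ρ m hl hlL hρ hsc xstar hmin x g hg hgne hdec lam hlam hm h1 h2
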